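/- Quantitative surjectivity: under the hypotheses |v|_{s+2σ} < σ with v ∈ 𝒜(𝕋ⁿ_{s+2σ}, ℂⁿ), for every y ∈ ℝⁿ_s = ℝⁿ × i[−s,s]ⁿ there exists a unique x ∈ ℝⁿ_{s+σ} with x + v(p x) = y, where p is the covering projection; i.e. the map x ↦ y − v(p x) is a contraction of ℝⁿ_{s+σ} with a unique fixed point. -/

import Mathlib

/-- The closed strip of width `r` in `ℂⁿ` (lift of `𝕋ⁿ_r`). -/
def strip (n : ℕ) (r : ℝ) : Set (Fin n → ℂ) := {z | ∀ j, |(z j).im| ≤ r}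

/-- The open strip of width `r` (interior of `strip n r`). -/
def ostrip (n : ℕ) (r : ℝ) : Set (Fin n → ℂ) := {z | ∀ j, |(z j).im| < r}

/-! Rewriting `x + v x = y` as the fixed point equation `x = y - v x`, the map `x ↦ y - v x`
sends the strip of width `s + σ` into itself because `‖v‖ < σ`. Every point of that strip is the
centre of a ball of radius `σ` inside the strip of width `s + 2σ`, on which `‖v‖ ≤ M`, so Cauchy's
estimate gives `‖v'‖ ≤ M / σ < 1`; by convexity `v` is a contraction there, and the strip is
closed, so Banach's fixed point theorem applies. -/

open Metric Set Function

section Cauchy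

variable {E F : Type*} [NormedAddCommGroup E] [NormedSpace ℂ E]
  [NormedAddCommGroup F] [NormedSpace ℂ F]

theorem norm_fderiv_le_of_forall_mem_closedBall_norm_le {f : E → F} {c : E} {R C : ℝ}
    (hR : 0 < R) (hd : DiffContOnCl ℂ f (ball c R)) (hC : ∀ z ∈ closedBall c R, ‖f z‖ ≤ C) :
    ‖fderiv ℂ f c‖ ≤ C / R := by
  have hC₀ : 0 ≤ C := (norm_nonneg _).trans (hC c (mem_closedBall_self hR.le))
  refine ContinuousLinearMap.opNorm_le_bound _ (by positivity) fun w => ?_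
  rcases eq_or_ne w 0 with rfl | hw
  · simp
  have hw₀ : 0 < ‖w‖ := norm_pos_iff.2 hw
  set line : ℂ → E := fun t => c + t • w
  have hline : ∀ t : ℂ, dist (line t) c = ‖t‖ * ‖w‖ := fun t => by
    simp [line, dist_eq_norm, norm_smul]
  have hmaps : MapsTo line (ball 0 (R / ‖w‖)) (ball c R) := fun t ht => by
    rw [mem_ball_zero_iff, lt_div_iff₀ hw₀] at ht
    rwa [mem_ball, hline]
  have hderiv : HasDerivAt (f ∘ line) (fderiv ℂ f c w) 0 := by
    have hf : HasFDerivAt f (fderiv ℂ f c) (line 0) := by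
      simpa [line] using (hd.differentiableAt isOpen_ball (mem_ball_self hR)).hasFDerivAt
    refine hf.comp_hasDerivAt 0 ?_
    simpa [line] using ((hasDerivAt_id (0 : ℂ)).smul_const w).const_add c
  have hsphere : ∀ t ∈ sphere (0 : ℂ) (R / ‖w‖), ‖(f ∘ line) t‖ ≤ C := fun t ht => by
    rw [mem_sphere_zero_iff_norm] at ht
    refine hC _ ?_
    rw [mem_closedBall, hline, ht, div_mul_cancel₀ _ hw₀.ne']
  calc ‖fderiv ℂ f c w‖ = ‖deriv (f ∘ line) 0‖ := by rw [hderiv.deriv]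
    _ ≤ C / (R / ‖w‖) := Complex.norm_deriv_le_of_forall_mem_sphere_norm_le (by positivity)
        (hd.comp (by fun_prop : Differentiable ℂ line).diffContOnCl hmaps) hsphere
    _ = C / R * ‖w‖ := by field_simp

end Cauchy

theorem LipschitzOnWith.existsUnique_isFixedPt {α : Type*} [MetricSpace α] {f : α → α}
    {s : Set α} {K : NNReal} (hf : LipschitzOnWith K f s) (hK : K < 1) (hsc : IsComplete s)
    (hsf : MapsTo f s s) (hs : s.Nonempty) : ∃! x, x ∈ s ∧ IsFixedPt f x := by
  have := hsc.completeSpace_coe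
  have : Nonempty s := hs.to_subtype
  have hcontr : ContractingWith K (hsf.restrict f s s) := ⟨hK, hf.mapsToRestrict hsf⟩
  refine ⟨hcontr.fixedPoint, ⟨Subtype.coe_prop _,
    congrArg Subtype.val hcontr.fixedPoint_isFixedPt⟩, ?_⟩
  rintro x ⟨hxs, hx⟩
  exact congrArg Subtype.val (hcontr.fixedPoint_unique (x := ⟨x, hxs⟩) (Subtype.ext hx))

section Strip

variable {n : ℕ}

theorem strip_eq_iInter (n : ℕ) (r : ℝ) :
    strip n r = ⋂ j, (fun z : Fin n → ℂ => (z j).im) ⁻¹' Icc (-r) r := by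
  ext z
  simp [strip, abs_le]

theorem ostrip_eq_iInter (n : ℕ) (r : ℝ) :
    ostrip n r = ⋂ j, (fun z : Fin n → ℂ => (z j).im) ⁻¹' Ioo (-r) r := by
  ext z
  simp [ostrip, abs_lt]

theorem isClosed_strip (n : ℕ) (r : ℝ) : IsClosed (strip n r) := by
  rw [strip_eq_iInter]
  exact isClosed_iInter fun j => isClosed_Icc.preimage (by fun_prop)

theorem isOpen_ostrip (n : ℕ) (r : ℝ) : IsOpen (ostrip n r) := by
  rw [ostrip_eq_iInter]
  exact isOpen_iInter_of_finite fun j => isOpen_Ioo.preimage (by fun_prop)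

theorem convex_strip (n : ℕ) (r : ℝ) : Convex ℝ (strip n r) := by
  rw [strip_eq_iInter]
  exact convex_iInter fun j => (convex_Icc _ _).linear_preimage
    (Complex.imLm.comp (LinearMap.proj j : (Fin n → ℂ) →ₗ[ℝ] ℂ))

theorem strip_mono {r r' : ℝ} (h : r ≤ r') : strip n r ⊆ strip n r' :=
  fun _ hz j => (hz j).trans h

theorem abs_im_apply_le_add_dist (x z : Fin n → ℂ) (j : Fin n) :
    |(z j).im| ≤ |(x j).im| + dist z x :=
  calc |(z j).im| = |(x j).im + (z j - x j).im| := by simp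
    _ ≤ |(x j).im| + |(z j - x j).im| := abs_add_le _ _
    _ ≤ |(x j).im| + ‖(z - x) j‖ := by gcongr; exact Complex.abs_im_le_norm _
    _ ≤ |(x j).im| + dist z x := by gcongr; rw [dist_eq_norm]; exact norm_le_pi_norm (z - x) j

theorem closedBall_subset_strip {x : Fin n → ℂ} {a : ℝ} (hx : x ∈ strip n a) (r : ℝ) :
    closedBall x r ⊆ strip n (a + r) :=
  fun z hz j => (abs_im_apply_le_add_dist x z j).trans (add_le_add (hx j) hz)

theorem ball_subset_ostrip {x : Fin n → ℂ} {a : ℝ} (hx : x ∈ strip n a) (r : ℝ) :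
    ball x r ⊆ ostrip n (a + r) :=
  fun z hz j => (abs_im_apply_le_add_dist x z j).trans_lt (add_lt_add_of_le_of_lt (hx j) hz)

theorem lipschitzOnWith_strip_of_norm_le {F : Type*} [NormedAddCommGroup F] [NormedSpace ℂ F]
    {f : (Fin n → ℂ) → F} {a σ C : ℝ} (hσ : 0 < σ) (hc : ContinuousOn f (strip n (a + σ)))
    (hd : DifferentiableOn ℂ f (ostrip n (a + σ))) (hC : ∀ z ∈ strip n (a + σ), ‖f z‖ ≤ C) :
    LipschitzOnWith (C / σ).toNNReal f (strip n a) := by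
  have hball : ∀ x ∈ strip n a, DiffContOnCl ℂ f (ball x σ) := fun x hx =>
    .mk_ball (hd.mono (ball_subset_ostrip hx σ)) (hc.mono (closedBall_subset_strip hx σ))
  refine (convex_strip n a).lipschitzOnWith_of_nnnorm_fderiv_le
    (fun x hx => (hball x hx).differentiableAt isOpen_ball (mem_ball_self hσ)) fun x hx => ?_
  rw [← NNReal.coe_le_coe, coe_nnnorm, Real.coe_toNNReal']
  refine le_max_of_le_left (norm_fderiv_le_of_forall_mem_closedBall_norm_le hσ (hball x hx) ?_)
  exact fun z hz => hC z (closedBall_subset_strip hx σ hz)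

end Strip

theorem stmt_10_general (n : ℕ) (s σ : ℝ) (hσ : 0 < σ)
    (v : (Fin n → ℂ) → (Fin n → ℂ))
    (hv₁ : ContinuousOn v (strip n (s + 2 * σ)))
    (hv₂ : DifferentiableOn ℂ v (ostrip n (s + 2 * σ)))
    (M : ℝ) (hMσ : M < σ)
    (hM : ∀ z ∈ strip n (s + 2 * σ), ∀ j, ‖v z j‖ ≤ M) :
    ∀ y ∈ strip n s, ∃! x : Fin n → ℂ, x ∈ strip n (s + σ) ∧ x + v x = y := by
  intro y hy
  rw [show s + 2 * σ = s + σ + σ by ring] at hv₁ hv₂ hM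
  set C := max M 0
  have hC : ∀ z ∈ strip n (s + σ + σ), ‖v z‖ ≤ C := fun z hz =>
    (pi_norm_le_iff_of_nonneg (le_max_right _ _)).2 fun j => (hM z hz j).trans (le_max_left _ _)
  have hlip := lipschitzOnWith_strip_of_norm_le hσ hv₁ hv₂ hC
  have hK : (C / σ).toNNReal < 1 := Real.toNNReal_lt_one.2 ((div_lt_one hσ).2 (max_lt hMσ hσ))
  have hmaps : MapsTo (fun x => y - v x) (strip n (s + σ)) (strip n (s + σ)) := fun x hx =>
    strip_mono (by linarith [max_lt hMσ hσ]) <| closedBall_subset_strip hy C <| by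
      simpa [dist_self_sub_left] using hC x (strip_mono (by linarith) hx)
  have hlip' : LipschitzOnWith (C / σ).toNNReal (fun x => y - v x) (strip n (s + σ)) :=
    .of_dist_le_mul fun x hx x' hx' => by
      simpa only [dist_sub_left] using hlip.dist_le_mul x hx x' hx'
  refine existsUnique_congr (fun x => and_congr_right fun _ => ?_) |>.1 <|
    hlip'.existsUnique_isFixedPt hK (isClosed_strip n _).isComplete hmaps
      ⟨y, strip_mono (by linarith) hy⟩
  rw [IsFixedPt, sub_eq_iff_eq_add, eq_comm, add_comm]

/-- Quantitative surjectivity: if `v ∈ 𝒜(𝕋ⁿ_{s+2σ}, ℂⁿ)` with sup norm `< σ`, then for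
every `y ∈ ℝⁿ × i[-s,s]ⁿ` there is a unique `x ∈ ℝⁿ × i[-s-σ, s+σ]ⁿ` with
`x + v(x) = y`. -/
theorem stmt_10 (n : ℕ) (s σ : ℝ) (hs : 0 ≤ s) (hσ : 0 < σ)
    (v : (Fin n → ℂ) → (Fin n → ℂ))
    (hv₁ : ContinuousOn v (strip n (s + 2 * σ)))
    (hv₂ : DifferentiableOn ℂ v (ostrip n (s + 2 * σ)))
    (hper : ∀ (z : Fin n → ℂ) (j : Fin n),
      v (Function.update z j (z j + 2 * Real.pi)) = v z)
    (M : ℝ) (hMσ : M < σ)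
    (hM : ∀ z ∈ strip n (s + 2 * σ), ∀ j, ‖v z j‖ ≤ M) :
    ∀ y ∈ strip n s, ∃! x : Fin n → ℂ, x ∈ strip n (s + σ) ∧ x + v x = y :=
  stmt_10_general n s σ hσ v hv₁ hv₂ M hMσ hM
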